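/- arXiv:2305.16974 — 3 statements merged into one kernel-verified Lean document; each statement's English description precedes it below -/
import Mathlib

section
/- Let A be an n×m real matrix with columns A_1,…,A_m, and for each j let Â_j denote the orthogonal projection of A_j onto the span of the remaining m−1 columns. Then m^{-1} · min_{1≤j≤m} ‖A_j − Â_j‖² ≤ λ_min(AᵀA) ≤ m · min_{1≤j≤m} ‖A_j − Â_j‖², where λ_min denotes the smallest eigenvalue. -/
open Submodule

noncomputable section

theorem Matrix.isHermitian_transpose_mul_self {m n α : Type*} [Fintype m] [CommSemiring α]
    [StarRing α] [TrivialStar α] (A : Matrix m n α) : (Matrix.transpose A * A).IsHermitian := by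
  have h := Matrix.isHermitian_conjTranspose_mul_self A
  rwa [Matrix.conjTranspose_eq_transpose_of_trivial] at h

open Matrix

variable {n m : ℕ} (A : Matrix (Fin n) (Fin m) ℝ)

abbrev ev {k : ℕ} (v : Fin k → ℝ) : EuclideanSpace ℝ (Fin k) :=
  (WithLp.equiv 2 (Fin k → ℝ)).symm v

lemma repr_mulvec (x : EuclideanSpace ℝ (Fin m)) (i : Fin m) :
    (Matrix.isHermitian_transpose_mul_self A).eigenvectorBasis.repr (ev ((Aᵀ * A) *ᵥ x)) i
      = (Matrix.isHermitian_transpose_mul_self A).eigenvalues i *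
        (Matrix.isHermitian_transpose_mul_self A).eigenvectorBasis.repr x i := by
  set hA := Matrix.isHermitian_transpose_mul_self A
  set b := hA.eigenvectorBasis
  rw [OrthonormalBasis.repr_apply_apply, OrthonormalBasis.repr_apply_apply]
  have h1 : inner (𝕜 := ℝ) (b i) (ev ((Aᵀ * A) *ᵥ x))
      = ((b i : EuclideanSpace ℝ (Fin m)) : Fin m → ℝ) ⬝ᵥ ((Aᵀ * A) *ᵥ (x : Fin m → ℝ)) := by
    simp [PiLp.inner_apply, dotProduct, RCLike.inner_apply, mul_comm]
  rw [h1, Matrix.dotProduct_mulVec]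
  have htr : (Aᵀ * A)ᵀ = Aᵀ * A := by simp [Matrix.transpose_mul]
  have h2 : vecMul ((b i : EuclideanSpace ℝ (Fin m)) : Fin m → ℝ) (Aᵀ * A)
      = hA.eigenvalues i • ((b i : EuclideanSpace ℝ (Fin m)) : Fin m → ℝ) := by
    rw [← Matrix.mulVec_transpose, htr]
    exact hA.mulVec_eigenvectorBasis i
  rw [h2, smul_dotProduct]
  simp [PiLp.inner_apply, dotProduct, RCLike.inner_apply, mul_comm, Finset.mul_sum, mul_left_comm]

lemma quad_eq (x : EuclideanSpace ℝ (Fin m)) :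
    inner (𝕜 := ℝ) x (ev ((Aᵀ * A) *ᵥ x)) = ‖ev (A *ᵥ x)‖ ^ 2 := by
  have h1 : inner (𝕜 := ℝ) x (ev ((Aᵀ * A) *ᵥ x))
      = (x : Fin m → ℝ) ⬝ᵥ ((Aᵀ * A) *ᵥ (x : Fin m → ℝ)) := by
    simp [PiLp.inner_apply, dotProduct, RCLike.inner_apply, mul_comm]
  rw [h1, ← Matrix.mulVec_mulVec, Matrix.dotProduct_mulVec, Matrix.vecMul_transpose]
  rw [← real_inner_self_eq_norm_sq]
  simp [PiLp.inner_apply, dotProduct, RCLike.inner_apply, mul_comm, ev]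
  rw [EuclideanSpace.norm_eq, Real.sq_sqrt]
  · simp [sq, Real.norm_eq_abs, abs_mul_abs_self]
  · positivity

lemma rayleigh_le (hne : (Finset.univ : Finset (Fin m)).Nonempty) (x : EuclideanSpace ℝ (Fin m)) :
    Finset.univ.inf' hne (Matrix.isHermitian_transpose_mul_self A).eigenvalues * ‖x‖ ^ 2
      ≤ ‖ev (A *ᵥ x)‖ ^ 2 := by
  set hA := Matrix.isHermitian_transpose_mul_self A
  set b := hA.eigenvectorBasis
  set lam := Finset.univ.inf' hne hA.eigenvalues with hlam
  rw [← quad_eq]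
  have hinner : inner (𝕜 := ℝ) x (ev ((Aᵀ * A) *ᵥ x))
      = inner (𝕜 := ℝ) (b.repr x) (b.repr (ev ((Aᵀ * A) *ᵥ x))) :=
    (b.repr.inner_map_map x _).symm
  have hnorm : ‖x‖ ^ 2 = ∑ i, b.repr x i ^ 2 := by
    calc ‖x‖ ^ 2 = ‖b.repr x‖ ^ 2 := by rw [b.repr.norm_map]
      _ = inner (𝕜 := ℝ) (b.repr x) (b.repr x) := (real_inner_self_eq_norm_sq _).symm
      _ = ∑ i, b.repr x i ^ 2 := by
          rw [PiLp.inner_apply]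
          simp only [RCLike.inner_apply, starRingEnd_apply, star_trivial, sq]
  rw [hinner, hnorm]
  simp only [PiLp.inner_apply, RCLike.inner_apply, starRingEnd_apply, star_trivial]
  rw [Finset.mul_sum]
  apply Finset.sum_le_sum
  intro i _
  rw [repr_mulvec]
  have h1 : lam ≤ hA.eigenvalues i := Finset.inf'_le _ (Finset.mem_univ i)
  have h2 : (0:ℝ) ≤ b.repr x i ^ 2 := sq_nonneg _
  nlinarith [sq_nonneg (b.repr x i)]

lemma norm_sq_ev {k : ℕ} (y : EuclideanSpace ℝ (Fin k)) : ‖y‖ ^ 2 = ∑ i, y i ^ 2 := by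
  rw [← real_inner_self_eq_norm_sq, PiLp.inner_apply]
  simp only [RCLike.inner_apply, starRingEnd_apply, star_trivial, sq]

lemma mulVec_eq_sum (x : Fin m → ℝ) :
    ev (A *ᵥ x) = ∑ k, x k • (ev (fun i => A i k)) := by
  have h : A *ᵥ x = ∑ k, x k • (fun i => A i k) := by
    funext i
    simp [Matrix.mulVec, dotProduct, Finset.sum_apply, mul_comm]
  calc ev (A *ᵥ x)
      = (WithLp.linearEquiv 2 ℝ (Fin n → ℝ)).symm (∑ k, x k • fun i => A i k) := by
        rw [← h]; rfl
    _ = ∑ k, x k • ev (fun i => A i k) := by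
        rw [map_sum]
        exact Finset.sum_congr rfl fun k _ => (WithLp.linearEquiv 2 ℝ (Fin n → ℝ)).symm.map_smul _ _

lemma proj_dist_le {E : Type*} [NormedAddCommGroup E] [InnerProductSpace ℝ E]
    (S : Submodule ℝ E) [HasOrthogonalProjection S] (u : E) (w : E) (hw : w ∈ S) :
    ‖u - (orthogonalProjection S u : E)‖ ≤ ‖u - w‖ := by
  rw [show (orthogonalProjection S u : E) = S.starProjection u from rfl, starProjection_minimal]
  exact ciInf_le ⟨0, by rintro _ ⟨z, rfl⟩; exact norm_nonneg _⟩ (⟨w, hw⟩ : S)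

lemma lower_geom (x : Fin m → ℝ) (j : Fin m) :
    x j ^ 2 * ‖ev (fun i => A i j) -
      (orthogonalProjection (span ℝ ((fun k => ev fun i => A i k) '' {k | k ≠ j}))
        (ev fun i => A i j) : EuclideanSpace ℝ (Fin n))‖ ^ 2 ≤ ‖ev (A *ᵥ x)‖ ^ 2 := by
  set col : Fin m → EuclideanSpace ℝ (Fin n) := fun k => ev fun i => A i k with hcol
  set S := span ℝ (col '' {k | k ≠ j}) with hS
  show x j ^ 2 * ‖col j - (orthogonalProjection S (col j) : EuclideanSpace ℝ (Fin n))‖ ^ 2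
      ≤ ‖ev (A *ᵥ x)‖ ^ 2
  rcases eq_or_ne (x j) 0 with h0 | h0
  · rw [h0]
    simpa using sq_nonneg ‖ev (A *ᵥ x)‖
  · set w : EuclideanSpace ℝ (Fin n) :=
      (-(x j)⁻¹) • ∑ k ∈ Finset.univ.erase j, x k • col k with hw_def
    have hw : w ∈ S := by
      apply S.smul_mem
      apply Submodule.sum_mem
      intro k hk
      exact S.smul_mem _ (Submodule.subset_span ⟨k, (Finset.mem_erase.mp hk).1, rfl⟩)
    have key : col j - w = (x j)⁻¹ • ev (A *ᵥ x) := by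
      rw [mulVec_eq_sum, ← Finset.add_sum_erase _ _ (Finset.mem_univ j),
        smul_add, smul_smul, inv_mul_cancel₀ h0, one_smul]
      rw [hw_def]
      rw [neg_smul, sub_neg_eq_add]
    have hle : ‖col j - (orthogonalProjection S (col j) : EuclideanSpace ℝ (Fin n))‖
        ≤ ‖col j - w‖ := proj_dist_le S _ w hw
    rw [key, norm_smul] at hle
    have hxa : (0:ℝ) < |x j| := abs_pos.mpr h0
    have h2 : |x j| * ‖col j - (orthogonalProjection S (col j) : EuclideanSpace ℝ (Fin n))‖
        ≤ ‖ev (A *ᵥ x)‖ := by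
      have := mul_le_mul_of_nonneg_left hle (le_of_lt hxa)
      rwa [Real.norm_eq_abs, abs_inv, ← mul_assoc, mul_inv_cancel₀ (ne_of_gt hxa), one_mul] at this
    calc x j ^ 2 * ‖col j - (orthogonalProjection S (col j) : EuclideanSpace ℝ (Fin n))‖ ^ 2
          = (|x j| * ‖col j - (orthogonalProjection S (col j) : EuclideanSpace ℝ (Fin n))‖) ^ 2 := by
            rw [mul_pow, sq_abs]
      _ ≤ ‖ev (A *ᵥ x)‖ ^ 2 := pow_le_pow_left₀ (by positivity) h2 2

lemma exists_x (j : Fin m) : ∃ x : Fin m → ℝ, x j = 1 ∧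
    ev (A *ᵥ x) = ev (fun i => A i j) -
      (orthogonalProjection (span ℝ ((fun k => ev fun i => A i k) '' {k | k ≠ j}))
        (ev fun i => A i j) : EuclideanSpace ℝ (Fin n)) := by
  classical
  set col : Fin m → EuclideanSpace ℝ (Fin n) := fun k => ev fun i => A i k with hcol
  set S := span ℝ (col '' {k | k ≠ j}) with hS
  set p : EuclideanSpace ℝ (Fin n) :=
    (orthogonalProjection S (col j) : EuclideanSpace ℝ (Fin n)) with hp
  have hmem : p ∈ S := (orthogonalProjection S (col j)).2
  have himg : col '' {k | k ≠ j} = Set.range (fun k : {k : Fin m // k ≠ j} => col k) :=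
    Set.image_eq_range _ _
  rw [hS, himg, mem_span_range_iff_exists_fun] at hmem
  obtain ⟨c, hc⟩ := hmem
  refine ⟨fun k => if h : k = j then 1 else -(c ⟨k, h⟩), by simp, ?_⟩
  rw [mulVec_eq_sum, ← Finset.add_sum_erase _ _ (Finset.mem_univ j)]
  have h1 : ∑ k ∈ Finset.univ.erase j,
      (if h : k = j then (1:ℝ) else -(c ⟨k, h⟩)) • col k = -p := by
    rw [Finset.sum_subtype (p := fun k => k ≠ j) (Finset.univ.erase j)
      (fun k => by simp [Finset.mem_erase]) (fun k => (if h : k = j then (1:ℝ) else -(c ⟨k, h⟩)) • col k)]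
    rw [← hc, ← Finset.sum_neg_distrib]
    apply Finset.sum_congr rfl
    intro k _
    rw [dif_neg k.2, neg_smul]
  rw [h1, dif_pos rfl, one_smul, sub_eq_add_neg]

lemma eig_eq (i : Fin m) :
    (Matrix.isHermitian_transpose_mul_self A).eigenvalues i =
      ‖ev (A *ᵥ (Matrix.isHermitian_transpose_mul_self A).eigenvectorBasis i)‖ ^ 2 := by
  set hA := Matrix.isHermitian_transpose_mul_self A
  set b := hA.eigenvectorBasis
  have h2 : ev ((Aᵀ * A) *ᵥ (b i : Fin m → ℝ)) = hA.eigenvalues i • b i := by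
    rw [show ((Aᵀ * A) *ᵥ (b i : Fin m → ℝ)) = hA.eigenvalues i • (b i : Fin m → ℝ) from
      hA.mulVec_eigenvectorBasis i]
    rfl
  have h3 := quad_eq A (b i)
  rw [h2, real_inner_smul_right, real_inner_self_eq_norm_sq, b.orthonormal.1 i] at h3
  rw [← h3]; ring

theorem stmt3 (n m : ℕ) (hm : 0 < m) (A : Matrix (Fin n) (Fin m) ℝ) :
    let col : Fin m → EuclideanSpace ℝ (Fin n) := fun j => WithLp.toLp 2 (fun i => A i j)
    let proj : Fin m → EuclideanSpace ℝ (Fin n) := fun j =>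
      (orthogonalProjection (Submodule.span ℝ (col '' {k | k ≠ j})) (col j) :
        EuclideanSpace ℝ (Fin n))
    let hne : (Finset.univ : Finset (Fin m)).Nonempty :=
      Finset.univ_nonempty_iff.mpr ⟨⟨0, hm⟩⟩
    let lammin : ℝ :=
      Finset.univ.inf' hne (Matrix.isHermitian_transpose_mul_self A).eigenvalues
    let mindist : ℝ := Finset.univ.inf' hne (fun j => ‖col j - proj j‖ ^ 2)
    (m : ℝ)⁻¹ * mindist ≤ lammin ∧ lammin ≤ (m : ℝ) * mindist := by
  intro col proj hne lammin mindist
  classical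
  have hm' : (0:ℝ) < m := Nat.cast_pos.mpr hm
  have hmind_nonneg : 0 ≤ mindist :=
    Finset.le_inf' hne _ (fun j _ => sq_nonneg _)
  have hmind_le : ∀ j : Fin m, mindist ≤ ‖col j - proj j‖ ^ 2 :=
    fun j => Finset.inf'_le _ (Finset.mem_univ j)
  obtain ⟨i0, -, hi0⟩ := Finset.exists_mem_eq_inf' hne
    (Matrix.isHermitian_transpose_mul_self A).eigenvalues
  set v : EuclideanSpace ℝ (Fin m) :=
    (Matrix.isHermitian_transpose_mul_self A).eigenvectorBasis i0 with hv_def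
  have hv1 : ‖v‖ = 1 :=
    (Matrix.isHermitian_transpose_mul_self A).eigenvectorBasis.orthonormal.1 i0
  have hlam_eq : lammin = ‖ev (A *ᵥ v)‖ ^ 2 := hi0.trans (eig_eq A i0)
  have hlam_nonneg : 0 ≤ lammin := by rw [hlam_eq]; positivity
  constructor
  · -- lower bound
    obtain ⟨j, -, hj⟩ := Finset.exists_max_image Finset.univ (fun k => (v k) ^ 2) hne
    have hsum : ∑ k, v k ^ 2 = 1 := by rw [← norm_sq_ev, hv1, one_pow]
    have hle1 : 1 ≤ (m : ℝ) * v j ^ 2 := by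
      calc (1:ℝ) = ∑ k, v k ^ 2 := hsum.symm
        _ ≤ ∑ _k : Fin m, v j ^ 2 :=
            Finset.sum_le_sum (fun k hk => hj k hk)
        _ = (m : ℝ) * v j ^ 2 := by
            rw [Finset.sum_const, Finset.card_univ, Fintype.card_fin, nsmul_eq_mul]
    have hinv : (m : ℝ)⁻¹ ≤ v j ^ 2 := by
      rw [inv_le_iff_one_le_mul₀ hm']
      linarith [hle1]
    have hgeom : v j ^ 2 * ‖col j - proj j‖ ^ 2 ≤ ‖ev (A *ᵥ v)‖ ^ 2 :=
      lower_geom A v j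
    calc (m : ℝ)⁻¹ * mindist ≤ v j ^ 2 * ‖col j - proj j‖ ^ 2 :=
          mul_le_mul hinv (hmind_le j) hmind_nonneg (sq_nonneg _)
      _ ≤ ‖ev (A *ᵥ v)‖ ^ 2 := hgeom
      _ = lammin := hlam_eq.symm
  · -- upper bound
    obtain ⟨j, -, hjm⟩ := Finset.exists_mem_eq_inf' hne (fun j => ‖col j - proj j‖ ^ 2)
    obtain ⟨x, hxj, hx⟩ := exists_x A j
    have h1 : 1 ≤ ‖ev x‖ ^ 2 := by
      rw [norm_sq_ev]
      calc (1:ℝ) = x j ^ 2 := by rw [hxj]; norm_num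
        _ ≤ ∑ k, x k ^ 2 :=
            Finset.single_le_sum (fun k _ => sq_nonneg (x k)) (Finset.mem_univ j)
    have hx' : ev (A *ᵥ x) = col j - proj j := hx
    calc lammin ≤ lammin * ‖ev x‖ ^ 2 := le_mul_of_one_le_right hlam_nonneg h1
      _ ≤ ‖ev (A *ᵥ x)‖ ^ 2 := rayleigh_le A hne (ev x)
      _ = ‖col j - proj j‖ ^ 2 := by rw [hx']
      _ = mindist := hjm.symm
      _ ≤ (m : ℝ) * mindist := le_mul_of_one_le_left hmind_nonneg (by exact_mod_cast hm)
end
end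

section
/- Let M₁ be a symmetric positive definite real n×n matrix with λ_min(M₁) ≥ s > 0, let x ∈ R^n, and set M₂ = M₁ + x xᵀ. Then 0 ≤ xᵀ M₂^{-1} x ≤ 1 and xᵀ M₂^{-1} x ≤ n · ‖x‖² / s. -/
open Matrix

lemma vecMulVec_posSemidef (n : ℕ) (x : Fin n → ℝ) : (vecMulVec x x).PosSemidef := by
  rw [posSemidef_iff_dotProduct_mulVec]
  constructor
  · ext i j
    simp [vecMulVec_apply, conjTranspose_apply, mul_comm]
  · intro y
    have h : vecMulVec x x *ᵥ y = (x ⬝ᵥ y) • x := by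
      ext i
      simp only [mulVec, vecMulVec_apply, dotProduct, Pi.smul_apply, smul_eq_mul,
        Finset.sum_mul]
      exact Finset.sum_congr rfl fun j _ => by ring
    rw [h]
    simp only [dotProduct_smul, RCLike.re_to_real, smul_eq_mul, star_trivial]
    rw [show y ⬝ᵥ x = x ⬝ᵥ y from dotProduct_comm y x]
    exact mul_self_nonneg _

lemma quad_lower (n : ℕ) (M : Matrix (Fin n) (Fin n) ℝ) (hM : M.IsHermitian)
    (s : ℝ) (hmin : ∀ i, s ≤ hM.eigenvalues i) (y : Fin n → ℝ) :
    s * (y ⬝ᵥ y) ≤ y ⬝ᵥ (M *ᵥ y) := by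
  set V : Matrix (Fin n) (Fin n) ℝ := (hM.eigenvectorUnitary : Matrix (Fin n) (Fin n) ℝ) with hV
  have hVstar : star V = Vᵀ := by
    ext i j; simp [conjTranspose_apply]
  have hunit : V * Vᵀ = 1 := by
    rw [← hVstar]
    exact (Matrix.mem_unitaryGroup_iff).mp hM.eigenvectorUnitary.2
  set z : Fin n → ℝ := Vᵀ *ᵥ y with hz
  have hdiag : (diagonal (RCLike.ofReal ∘ hM.eigenvalues) : Matrix (Fin n) (Fin n) ℝ)
      = diagonal hM.eigenvalues := by
    ext i j; simp [diagonal]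
  have h1 : y ⬝ᵥ (M *ᵥ y) = z ⬝ᵥ (diagonal hM.eigenvalues *ᵥ z) := by
    conv_lhs => rw [hM.spectral_theorem, Unitary.conjStarAlgAut_apply]
    rw [hVstar, hdiag, ← hV]
    rw [← mulVec_mulVec, ← mulVec_mulVec, dotProduct_mulVec y V, ← mulVec_transpose]
  have h2 : z ⬝ᵥ z = y ⬝ᵥ y :=
    calc z ⬝ᵥ z = z ⬝ᵥ (Vᵀ *ᵥ y) := rfl
    _ = (z ᵥ* Vᵀ) ⬝ᵥ y := dotProduct_mulVec _ _ _
    _ = (V *ᵥ z) ⬝ᵥ y := by rw [vecMul_transpose]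
    _ = ((V * Vᵀ) *ᵥ y) ⬝ᵥ y := by rw [hz, mulVec_mulVec]
    _ = y ⬝ᵥ y := by rw [hunit, one_mulVec]
  rw [h1, ← h2]
  simp only [dotProduct, mulVec_diagonal, Finset.mul_sum]
  apply Finset.sum_le_sum
  intro i _
  have : s * (z i * z i) ≤ hM.eigenvalues i * (z i * z i) :=
    mul_le_mul_of_nonneg_right (hmin i) (mul_self_nonneg _)
  nlinarith [mul_self_nonneg (z i)]

theorem stmt6 (n : ℕ) (M₁ : Matrix (Fin n) (Fin n) ℝ) (hM₁ : M₁.PosDef)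
    (s : ℝ) (hs : 0 < s) (hmin : ∀ i, s ≤ hM₁.1.eigenvalues i)
    (x : Fin n → ℝ) :
    (0 ≤ x ⬝ᵥ ((M₁ + Matrix.vecMulVec x x)⁻¹ *ᵥ x) ∧
      x ⬝ᵥ ((M₁ + Matrix.vecMulVec x x)⁻¹ *ᵥ x) ≤ 1) ∧
    x ⬝ᵥ ((M₁ + Matrix.vecMulVec x x)⁻¹ *ᵥ x) ≤ (n : ℝ) * (∑ i, x i ^ 2) / s := by
  have hM₂ : (M₁ + vecMulVec x x).PosDef := hM₁.add_posSemidef (vecMulVec_posSemidef n x)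
  set M₂ := M₁ + vecMulVec x x with hM₂def
  set y : Fin n → ℝ := M₁⁻¹ *ᵥ x with hy
  set c : ℝ := x ⬝ᵥ y with hc
  set q : ℝ := x ⬝ᵥ (M₂⁻¹ *ᵥ x) with hq
  have hM₁inv : (M₁⁻¹).PosDef := hM₁.inv
  have hc0 : 0 ≤ c := by
    rcases eq_or_ne x 0 with h | h
    · simp [hc, h]
    · exact le_of_lt (by simpa using hM₁inv.dotProduct_mulVec_pos h)
  -- M₁ *ᵥ y = x
  have hMy : M₁ *ᵥ y = x := by
    rw [hy, mulVec_mulVec, Matrix.mul_nonsing_inv _ hM₁.det_pos.ne'.isUnit, one_mulVec]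
  -- vecMulVec mulVec
  have hvv : ∀ v : Fin n → ℝ, vecMulVec x x *ᵥ v = (x ⬝ᵥ v) • x := by
    intro v
    ext i
    simp only [mulVec, vecMulVec_apply, dotProduct, Pi.smul_apply, smul_eq_mul, Finset.sum_mul]
    exact Finset.sum_congr rfl fun j _ => by ring
  have hkey : M₂ *ᵥ y = (1 + c) • x := by
    rw [hM₂def, add_mulVec, hMy, hvv y, ← hc, add_smul, one_smul]
  have hinv : y = (1 + c) • (M₂⁻¹ *ᵥ x) := by
    have := congrArg (fun v => M₂⁻¹ *ᵥ v) hkey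
    simpa [mulVec_mulVec, Matrix.nonsing_inv_mul _ hM₂.det_pos.ne'.isUnit, one_mulVec,
      mulVec_smul] using this
  have hcq : c = (1 + c) * q :=
    calc c = x ⬝ᵥ y := hc
    _ = x ⬝ᵥ ((1 + c) • (M₂⁻¹ *ᵥ x)) := by rw [← hinv]
    _ = (1 + c) * q := by rw [dotProduct_smul, smul_eq_mul, hq]
  have h1c : 0 < 1 + c := by linarith
  have hq_eq : q = c / (1 + c) := by
    field_simp
    linarith [hcq]
  have hq0 : 0 ≤ q := by
    rw [hq_eq]; positivity
  have hq1 : q ≤ 1 := by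
    rw [hq_eq, div_le_one h1c]; linarith
  have hqc : q ≤ c := by
    rw [hq_eq, div_le_iff₀ h1c]; nlinarith
  -- bound c ≤ ‖x‖²/s
  have hns : s * (y ⬝ᵥ y) ≤ c := by
    have := quad_lower n M₁ hM₁.1 s hmin y
    rwa [hMy, dotProduct_comm y x, ← hc] at this
  have hcs : c ^ 2 ≤ (x ⬝ᵥ x) * (y ⬝ᵥ y) := by
    have := Finset.sum_mul_sq_le_sq_mul_sq Finset.univ x y
    simpa [hc, dotProduct, pow_two] using this
  have hxx0 : 0 ≤ x ⬝ᵥ x := by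
    simpa [dotProduct] using Finset.sum_nonneg fun i _ => mul_self_nonneg (x i)
  have hcb : c ≤ (x ⬝ᵥ x) / s := by
    rcases eq_or_lt_of_le hc0 with h | h
    · rw [← h]; positivity
    · rw [le_div_iff₀ hs]
      nlinarith [hns, hcs]
  have hsum : x ⬝ᵥ x = ∑ i, x i ^ 2 := by
    simp [dotProduct, pow_two]
  have hxn : x ⬝ᵥ x ≤ (n : ℝ) * (∑ i, x i ^ 2) := by
    rcases Nat.eq_zero_or_pos n with h | h
    · subst h; simp [dotProduct]
    · rw [hsum]
      nlinarith [Finset.sum_nonneg (fun i (_ : i ∈ (Finset.univ : Finset (Fin n))) => sq_nonneg (x i)),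
        (by exact_mod_cast h : (1:ℝ) ≤ n)]
  refine ⟨⟨hq0, hq1⟩, ?_⟩
  calc q ≤ c := hqc
    _ ≤ (x ⬝ᵥ x) / s := hcb
    _ ≤ (n : ℝ) * (∑ i, x i ^ 2) / s := by
        gcongr
end

section
/- Let ψ_1, …, ψ_T be vectors in R^d, and suppose V_τ := Σ_{s=1}^τ ψ_s ψ_sᵀ is positive definite for some τ ≤ T. Then Σ_{s=τ+1}^T ψ_sᵀ V_s^{-1} ψ_s ≤ log(det(V_T)) − log(det(V_τ)), where V_s = Σ_{k=1}^s ψ_k ψ_kᵀ. -/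
open Matrix

lemma vecMulVec_posSemidef_s9 {d : ℕ} (v : Fin d → ℝ) :
    (Matrix.vecMulVec v v).PosSemidef := by
  rw [Matrix.posSemidef_iff_dotProduct_mulVec]
  constructor
  · ext i j
    simp [Matrix.vecMulVec_apply, Matrix.conjTranspose_apply, mul_comm]
  · intro x
    have h : Matrix.vecMulVec v v *ᵥ x = (v ⬝ᵥ x) • v := by
      ext i
      simp only [Matrix.mulVec, Matrix.vecMulVec_apply, dotProduct, Pi.smul_apply,
        smul_eq_mul, Finset.sum_mul]
      exact Finset.sum_congr rfl fun j _ => by ring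
    rw [h]
    have h2 : star x ⬝ᵥ (v ⬝ᵥ x) • v = (v ⬝ᵥ x) * (x ⬝ᵥ v) := by
      simp only [dotProduct, Pi.smul_apply, smul_eq_mul, star_apply, star_trivial,
        Finset.mul_sum]
      exact Finset.sum_congr rfl fun j _ => by ring
    rw [h2, dotProduct_comm x v]
    exact mul_self_nonneg _

lemma det_sub_vecMulVec {d : ℕ} (B : Matrix (Fin d) (Fin d) ℝ) (hB : B.PosDef)
    (v : Fin d → ℝ) :
    (B - Matrix.vecMulVec v v).det = B.det * (1 - v ⬝ᵥ (B⁻¹ *ᵥ v)) := by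
  have hUnit : IsUnit B.det := (Ne.isUnit hB.det_pos.ne')
  have h1 : B - Matrix.vecMulVec v v
      = B + Matrix.replicateCol Unit (-v) * Matrix.replicateRow Unit v := by
    rw [Matrix.vecMulVec_eq Unit]
    have h : Matrix.replicateCol Unit (-v) = -Matrix.replicateCol Unit v := by
      ext i j; simp
    rw [h, Matrix.neg_mul, sub_eq_add_neg]
  rw [h1, Matrix.det_add_replicateCol_mul_replicateRow hUnit]
  congr 1
  rw [Matrix.det_unique]
  simp only [Matrix.add_apply, Matrix.one_apply_eq, Matrix.mul_apply, Matrix.replicateRow_apply,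
    Matrix.replicateCol_apply, Pi.neg_apply, dotProduct, Matrix.mulVec, mul_neg,
    Finset.univ_unique, Finset.sum_const, Finset.card_singleton, one_smul]
  rw [sub_eq_add_neg]
  congr 1
  rw [← Finset.sum_neg_distrib, Finset.sum_neg_distrib, Finset.sum_neg_distrib, neg_inj]
  simp only [Finset.sum_mul, Finset.mul_sum]
  rw [Finset.sum_comm]
  exact Finset.sum_congr rfl fun i _ => Finset.sum_congr rfl fun j _ => by ring

theorem stmt9 (d : ℕ) (ψ : ℕ → Fin d → ℝ) (τ T : ℕ) (hτT : τ ≤ T)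
    (V : ℕ → Matrix (Fin d) (Fin d) ℝ)
    (hV : ∀ s, V s = ∑ k ∈ Finset.Icc 1 s, Matrix.vecMulVec (ψ k) (ψ k))
    (hpd : (V τ).PosDef) :
    ∑ s ∈ Finset.Ioc τ T, ψ s ⬝ᵥ ((V s)⁻¹ *ᵥ ψ s) ≤
      Real.log (V T).det - Real.log (V τ).det := by
  have hstep : ∀ s : ℕ, V (s + 1) = V s + Matrix.vecMulVec (ψ (s+1)) (ψ (s+1)) := by
    intro s
    rw [hV, hV, Finset.sum_Icc_succ_top (Nat.le_add_left 1 s)]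
  have hpds : ∀ s, τ ≤ s → (V s).PosDef := by
    intro s hs
    induction s with
    | zero => exact Nat.le_zero.mp hs ▸ hpd
    | succ n ih =>
      rcases Nat.lt_or_ge τ (n+1) with h | h
      · have := ih (Nat.lt_succ_iff.mp h)
        rw [hstep]
        exact this.add_posSemidef (vecMulVec_posSemidef_s9 _)
      · exact Nat.le_antisymm hs h ▸ hpd
  induction T with
  | zero =>
    have : τ = 0 := Nat.le_zero.mp hτT
    subst this
    simp
  | succ n ih =>
    rcases Nat.lt_or_ge τ (n+1) with h | h
    · have hτn : τ ≤ n := Nat.lt_succ_iff.mp h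
      have ihn := ih hτn
      rw [Finset.sum_Ioc_succ_top hτn]
      have hBpd : (V (n+1)).PosDef := hpds (n+1) (Nat.le_succ_of_le hτn)
      have hApd : (V n).PosDef := hpds n hτn
      have hsub : V (n+1) - Matrix.vecMulVec (ψ (n+1)) (ψ (n+1)) = V n := by
        rw [hstep n]; exact add_sub_cancel_right _ _
      have hdet : (V n).det = (V (n+1)).det * (1 - ψ (n+1) ⬝ᵥ ((V (n+1))⁻¹ *ᵥ ψ (n+1))) := by
        have := det_sub_vecMulVec (V (n+1)) hBpd (ψ (n+1))
        rw [hsub] at this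
        exact this
      set q := ψ (n+1) ⬝ᵥ ((V (n+1))⁻¹ *ᵥ ψ (n+1)) with hq
      have hdB : 0 < (V (n+1)).det := hBpd.det_pos
      have hdA : 0 < (V n).det := hApd.det_pos
      have hx : 0 < (V n).det / (V (n+1)).det := div_pos hdA hdB
      have hqeq : q = 1 - (V n).det / (V (n+1)).det := by
        field_simp [hdet]
        rw [hdet]; ring
      have hlog : Real.log ((V n).det / (V (n+1)).det)
          ≤ (V n).det / (V (n+1)).det - 1 := Real.log_le_sub_one_of_pos hx
      have hterm : q ≤ Real.log (V (n+1)).det - Real.log (V n).det := by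
        rw [hqeq]
        rw [Real.log_div hdA.ne' hdB.ne'] at hlog
        linarith
      linarith
    · have hτ : τ = n + 1 := Nat.le_antisymm hτT h
      subst hτ
      simp
end
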